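/- Let g be a smooth function on R^3 and define M = γ × p. Then under the bracket {γ_i, γ_j}_g = 0, {γ_i, p_j}_g = g(γ) δ_{ij}, {p_i, p_j}_g = ∂_j g · p_i − ∂_i g · p_j, the components of M and γ satisfy {M_i, M_j}_g = ε_{ijk}(g M_k + γ_k Σ_m M_m ∂_m g), {M_i, γ_j}_g = ε_{ijk} g γ_k, {γ_i, γ_j}_g = 0. -/

import Mathlib

open scoped BigOperators
noncomputable section

variable {n : ℕ}

/-- Partial derivative in the q (inl) or p (inr) direction on ℝⁿ × ℝⁿ. -/
def pdN : (Fin n ⊕ Fin n) → ((Fin n → ℝ) × (Fin n → ℝ) → ℝ) →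
    (Fin n → ℝ) × (Fin n → ℝ) → ℝ
  | .inl i, F, x => fderiv ℝ F x (Pi.single i 1, 0)
  | .inr i, F, x => fderiv ℝ F x (0, Pi.single i 1)

/-- Bracket of two functions determined by a structure matrix π. -/
def pbN (π : (Fin n → ℝ) × (Fin n → ℝ) → (Fin n ⊕ Fin n) → (Fin n ⊕ Fin n) → ℝ)
    (F G : (Fin n → ℝ) × (Fin n → ℝ) → ℝ) (x : (Fin n → ℝ) × (Fin n → ℝ)) : ℝ :=
  ∑ u, ∑ v, π x u v * pdN u F x * pdN v G x

/-- Structure matrix of the deformed canonical bracket: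
{q_i,q_j} = 0, {q_i,p_j} = g δ_ij, {p_i,p_j} = ∂_j g p_i - ∂_i g p_j. -/
def piQP (g : (Fin n → ℝ) → ℝ) (x : (Fin n → ℝ) × (Fin n → ℝ)) :
    (Fin n ⊕ Fin n) → (Fin n ⊕ Fin n) → ℝ
  | .inl _, .inl _ => 0
  | .inl i, .inr j => if i = j then g x.1 else 0
  | .inr i, .inl j => -(if i = j then g x.1 else 0)
  | .inr i, .inr j =>
      fderiv ℝ g x.1 (Pi.single j 1) * x.2 i - fderiv ℝ g x.1 (Pi.single i 1) * x.2 j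

/-- Cross product in ℝ³. -/
def cross (x y : Fin 3 → ℝ) : Fin 3 → ℝ :=
  ![x 1 * y 2 - x 2 * y 1, x 2 * y 0 - x 0 * y 2, x 0 * y 1 - x 1 * y 0]

/-- Levi-Civita symbol. -/
def eps (i j k : Fin 3) : ℝ :=
  ((((j : ℤ) - (i : ℤ)) * ((k : ℤ) - (i : ℤ)) * ((k : ℤ) - (j : ℤ))) / 2 : ℤ)

abbrev E3 := (Fin 3 → ℝ) × (Fin 3 → ℝ)

def L1 (a : Fin 3) : E3 →L[ℝ] ℝ :=
  (ContinuousLinearMap.proj a).comp (ContinuousLinearMap.fst ℝ _ _)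
def L2 (a : Fin 3) : E3 →L[ℝ] ℝ :=
  (ContinuousLinearMap.proj a).comp (ContinuousLinearMap.snd ℝ _ _)

lemma diff1 (a : Fin 3) (x : E3) : DifferentiableAt ℝ (fun y : E3 => y.1 a) x :=
  (L1 a).differentiableAt
lemma diff2 (a : Fin 3) (x : E3) : DifferentiableAt ℝ (fun y : E3 => y.2 a) x :=
  (L2 a).differentiableAt

lemma fd1 (a : Fin 3) (x v : E3) : fderiv ℝ (fun y : E3 => y.1 a) x v = v.1 a := by
  rw [show (fun y : E3 => y.1 a) = ⇑(L1 a) from rfl, (L1 a).fderiv]; rfl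
lemma fd2 (a : Fin 3) (x v : E3) : fderiv ℝ (fun y : E3 => y.2 a) x v = v.2 a := by
  rw [show (fun y : E3 => y.2 a) = ⇑(L2 a) from rfl, (L2 a).fderiv]; rfl

lemma fdmul (a b : Fin 3) (x v : E3) :
    fderiv ℝ (fun y : E3 => y.1 a * y.2 b) x v = v.1 a * x.2 b + x.1 a * v.2 b := by
  rw [fderiv_fun_mul (diff1 a x) (diff2 b x)]
  simp [fd1, fd2]; ring

lemma fd_cross0 (x v : E3) :
    fderiv ℝ (fun y : E3 => cross y.1 y.2 0) x v = cross v.1 x.2 0 + cross x.1 v.2 0 := by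
  rw [show (fun y : E3 => cross y.1 y.2 0) = fun y : E3 => y.1 1 * y.2 2 - y.1 2 * y.2 1 from rfl,
    fderiv_fun_sub ((diff1 _ x).fun_mul (diff2 _ x)) ((diff1 _ x).fun_mul (diff2 _ x))]
  simp only [ContinuousLinearMap.sub_apply, fdmul, cross, Matrix.cons_val_zero]
  ring

lemma fd_cross1 (x v : E3) :
    fderiv ℝ (fun y : E3 => cross y.1 y.2 1) x v = cross v.1 x.2 1 + cross x.1 v.2 1 := by
  rw [show (fun y : E3 => cross y.1 y.2 1) = fun y : E3 => y.1 2 * y.2 0 - y.1 0 * y.2 2 from rfl,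
    fderiv_fun_sub ((diff1 _ x).fun_mul (diff2 _ x)) ((diff1 _ x).fun_mul (diff2 _ x))]
  simp only [ContinuousLinearMap.sub_apply, fdmul, cross, Matrix.cons_val_one, Matrix.head_cons, Matrix.cons_val_zero]
  ring

lemma fd_cross2 (x v : E3) :
    fderiv ℝ (fun y : E3 => cross y.1 y.2 2) x v = cross v.1 x.2 2 + cross x.1 v.2 2 := by
  rw [show (fun y : E3 => cross y.1 y.2 2) = fun y : E3 => y.1 0 * y.2 1 - y.1 1 * y.2 0 from rfl,
    fderiv_fun_sub ((diff1 _ x).fun_mul (diff2 _ x)) ((diff1 _ x).fun_mul (diff2 _ x))]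
  simp only [ContinuousLinearMap.sub_apply, fdmul]
  simp [cross]
  ring

lemma fd_cross (i : Fin 3) (x v : E3) :
    fderiv ℝ (fun y : E3 => cross y.1 y.2 i) x v = cross v.1 x.2 i + cross x.1 v.2 i := by
  fin_cases i
  · exact fd_cross0 x v
  · exact fd_cross1 x v
  · exact fd_cross2 x v

/-- under the deformed bracket on (γ, p) ∈ ℝ³ × ℝ³, the momentum map
M = γ × p satisfies {M_i,M_j}_g = ε_ijk (g M_k + γ_k Σ_m M_m ∂_m g),
{M_i,γ_j}_g = ε_ijk g γ_k, {γ_i,γ_j}_g = 0. -/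
theorem momentum_map_brackets
    (g : (Fin 3 → ℝ) → ℝ) (hg : ContDiff ℝ (⊤ : ℕ∞) g)
    (x : (Fin 3 → ℝ) × (Fin 3 → ℝ)) :
    (∀ i j : Fin 3,
      pbN (piQP g) (fun y => cross y.1 y.2 i) (fun y => cross y.1 y.2 j) x =
        ∑ k, eps i j k * (g x.1 * cross x.1 x.2 k +
          x.1 k * ∑ m, cross x.1 x.2 m * fderiv ℝ g x.1 (Pi.single m 1))) ∧
    (∀ i j : Fin 3,
      pbN (piQP g) (fun y => cross y.1 y.2 i) (fun y => y.1 j) x =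
        ∑ k, eps i j k * g x.1 * x.1 k) ∧
    (∀ i j : Fin 3,
      pbN (piQP g) (fun y => y.1 i) (fun y => y.1 j) x = 0) := by
  refine ⟨?_, ?_, ?_⟩
  · intro i j
    fin_cases i <;> fin_cases j <;>
    · simp only [pbN, Fintype.sum_sum_type, Fin.sum_univ_three, pdN, piQP, fd_cross]
      simp [eps, cross, Pi.single_apply]
      try ring
  · intro i j
    fin_cases i <;> fin_cases j <;>
    · simp only [pbN, Fintype.sum_sum_type, Fin.sum_univ_three, pdN, piQP, fd_cross, fd1]
      simp [eps, cross, Pi.single_apply]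
      try ring
  · intro i j
    simp only [pbN, Fintype.sum_sum_type, Fin.sum_univ_three, pdN, piQP, fd1]
    simp [Pi.single_apply]
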